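/- For the Vilenkin system on a bounded Vilenkin group with R := sup_k m_k, the Fejér kernels satisfy the pointwise estimate n·|K_n(x)| ≤ 2R² · Σ_{l=0}^{|n|} M_l·|K_{M_l}(x)| for every n ∈ ℕ₊ and x ∈ G_m, where |n| = max{ j : n_j ≠ 0 } in the Vilenkin digit expansion n = Σ n_j M_j. -/

import Mathlib

noncomputable section
open MeasureTheory Finset Filter

namespace VilPaper

instance (n : ℕ) : TopologicalSpace (ZMod n) := ⊥
instance (n : ℕ) : DiscreteTopology (ZMod n) := ⟨rfl⟩

variable (m : ℕ → ℕ)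

abbrev mseq (k : ℕ) : ℕ := m k + 2
abbrev G := ∀ k, ZMod (mseq m k)

instance : IsTopologicalAddGroup (G m) := by infer_instance
instance : CompactSpace (G m) := by infer_instance
instance : MeasurableSpace (G m) := borel _
instance : BorelSpace (G m) := ⟨rfl⟩

def μV : Measure (G m) := Measure.addHaarMeasure ⊤

/-- The generalized number system: `M_0 = 1`, `M_{k+1} = m_k M_k`. -/
def Mgen : ℕ → ℕ
  | 0 => 1
  | k + 1 => mseq m k * Mgen k

/-- The cylinder sets `I_n(x)`. -/
def cyl (n : ℕ) (x : G m) : Set (G m) := {y | ∀ i < n, y i = x i}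

/-- `I_n := I_n(0)`. -/
def Icyl (n : ℕ) : Set (G m) := cyl m n 0

/-- Generalized Rademacher functions `r_k(x) = exp(2πi x_k / m_k)`. -/
def rad (k : ℕ) (x : G m) : ℂ :=
  Complex.exp (2 * Real.pi * Complex.I * ((x k).val : ℂ) / (mseq m k : ℂ))

/-- The `j`-th digit `n_j` of `n` in the number system `(M_k)`. -/
def digit (n j : ℕ) : ℕ := n / Mgen m j % mseq m j

/-- `|n| = max { j : n_j ≠ 0 }`. -/
def ndeg (n : ℕ) : ℕ := sSup {j | digit m n j ≠ 0}

/-- The Vilenkin system `ψ_n = ∏ r_k^{n_k}`. -/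
def psi (n : ℕ) (x : G m) : ℂ := ∏ k ∈ Finset.range (n + 1), rad m k x ^ digit m n k

/-- Dirichlet kernels `D_n = ∑_{k<n} ψ_k`. -/
def Dker (n : ℕ) (x : G m) : ℂ := ∑ k ∈ Finset.range n, psi m k x

/-- Fejér kernels `K_n = (1/n) ∑_{k=1}^n D_k`. -/
def Kker (n : ℕ) (x : G m) : ℂ := (n : ℂ)⁻¹ * ∑ k ∈ Finset.range n, Dker m (k + 1) x

/-- Vilenkin–Fourier coefficients. -/
def fcoef (f : G m → ℂ) (k : ℕ) : ℂ := ∫ x, f x * (starRingEnd ℂ) (psi m k x) ∂ μV m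

/-- Partial sums `S_n f` of the Vilenkin–Fourier series. -/
def partialSum (f : G m → ℂ) (n : ℕ) (x : G m) : ℂ :=
  ∑ k ∈ Finset.range n, fcoef m f k * psi m k x

/-- Fejér means `σ_n f = (1/n) ∑_{k=1}^n S_k f`. -/
def fejer (f : G m → ℂ) (n : ℕ) (x : G m) : ℂ :=
  (n : ℂ)⁻¹ * ∑ k ∈ Finset.range n, partialSum m f (k + 1) x

/-- `Q_n = ∑_{k<n} q_k`. -/
def Qsum (q : ℕ → ℝ) (n : ℕ) : ℝ := ∑ k ∈ Finset.range n, q k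

/-- The `T` means `T_n f = (1/Q_n) ∑_{k<n} q_k S_k f`. -/
def Tmean (q : ℕ → ℝ) (f : G m → ℂ) (n : ℕ) (x : G m) : ℂ :=
  (Qsum q n : ℂ)⁻¹ * ∑ k ∈ Finset.range n, (q k : ℂ) * partialSum m f k x

/-- Convolution on `G_m`. -/
def conv (f g : G m → ℂ) (x : G m) : ℂ := ∫ t, f t * g (x - t) ∂ μV m

/-- The modulus of continuity `ω_p(δ, f) = sup_{t ∈ I_s, 1/M_s < δ} ‖f(·-t) - f‖_p`. -/
def omega (p : ENNReal) (f : G m → ℂ) (δ : ℝ) : ENNReal :=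
  ⨆ (s : ℕ) (_ : (1 : ℝ) / (Mgen m s : ℝ) < δ) (t : G m) (_ : t ∈ Icyl m s),
    eLpNorm (fun x => f (x - t) - f x) p (μV m)

/-- The Lipschitz class `Lip(α, p)`. -/
def LipClass (p : ENNReal) (α : ℝ) (f : G m → ℂ) : Prop :=
  MemLp f p (μV m) ∧ ∃ C : ℝ, ∀ δ : ℝ, 0 < δ → omega m p f δ ≤ ENNReal.ofReal (C * δ ^ α)

/-! Write `S_n := ∑_{k=1}^n D_k = n K_n`. For `n = a M_j + r` with `a < m_j` and `r < M_j` one has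
`ψ_{a M_j + s} = ψ_{a M_j} ψ_s` for `s < M_j`, hence
`S_n = S_{a M_j} + r D_{a M_j} + ψ_{a M_j} S_r`.
Since `D_{a M_j} = (∑_{l<a} r_j^l) D_{M_j}` and `D_{M_j} = M_j 𝟙_{I_j}`, the first two terms
are bounded by `a² |S_{M_j}|` and `2a |S_{M_j}|`, and `a² + 2a < m_j² ≤ R²`. Induction on `j`
then gives `|S_n| ≤ R² ∑_{l ≤ |n|} |S_{M_l}|`. -/

lemma two_le_mseq (k : ℕ) : 2 ≤ mseq m k := Nat.le_add_left 2 (m k)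

lemma mseq_ne_zero (k : ℕ) : mseq m k ≠ 0 := (two_pos.trans_le (two_le_mseq m k)).ne'

lemma Mgen_succ (j : ℕ) : Mgen m (j + 1) = mseq m j * Mgen m j := rfl

lemma Mgen_pos (j : ℕ) : 0 < Mgen m j := by
  induction j with
  | zero => exact Nat.one_pos
  | succ j ih => exact Nat.mul_pos (two_pos.trans_le (two_le_mseq m j)) ih

lemma Mgen_strictMono : StrictMono (Mgen m) :=
  strictMono_nat_of_lt_succ fun j => by
    rw [Mgen_succ]
    exact lt_mul_left (Mgen_pos m j) (two_le_mseq m j)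

lemma Mgen_mono : Monotone (Mgen m) := (Mgen_strictMono m).monotone

lemma lt_Mgen_self (j : ℕ) : j < Mgen m j := by
  induction j with
  | zero => exact Mgen_pos m 0
  | succ j ih => exact lt_of_le_of_lt ih (Mgen_strictMono m j.lt_succ_self)

lemma Mgen_dvd {i j : ℕ} (h : i ≤ j) : Mgen m i ∣ Mgen m j := by
  induction h with
  | refl => exact dvd_rfl
  | step _ ih => exact dvd_mul_of_dvd_right ih _

lemma exists_Mgen_le_lt_succ {n : ℕ} (hn : 1 ≤ n) :
    ∃ j, Mgen m j ≤ n ∧ n < Mgen m (j + 1) := by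
  have hex : ∃ j, n < Mgen m (j + 1) :=
    ⟨n, (lt_Mgen_self m n).trans (Mgen_strictMono m n.lt_succ_self)⟩
  refine ⟨Nat.find hex, ?_, Nat.find_spec hex⟩
  rcases h : Nat.find hex with _ | i
  · exact hn
  · exact not_lt.1 (Nat.find_min hex (by omega))

lemma digit_eq_zero_of_lt_Mgen {n j : ℕ} (h : n < Mgen m j) : digit m n j = 0 := by
  simp [digit, Nat.div_eq_of_lt h]

lemma digit_mul_Mgen_add_of_lt {q k i j : ℕ} (hij : i < j) :
    digit m (q * Mgen m j + k) i = digit m k i := by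
  obtain ⟨c, hc⟩ := Mgen_dvd m (Nat.succ_le_of_lt hij)
  rw [Mgen_succ] at hc
  have : q * Mgen m j + k = k + Mgen m i * (mseq m i * (q * c)) := by rw [hc]; ring
  rw [digit, digit, this, Nat.add_mul_div_left _ _ (Mgen_pos m i), Nat.add_mul_mod_self_left]

lemma digit_mul_Mgen_of_lt {q i j : ℕ} (hij : i < j) : digit m (q * Mgen m j) i = 0 := by
  simpa [digit] using digit_mul_Mgen_add_of_lt m (q := q) (k := 0) hij

lemma digit_mul_Mgen_add_of_le {q k i j : ℕ} (hk : k < Mgen m j) (hji : j ≤ i) :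
    digit m (q * Mgen m j + k) i = digit m (q * Mgen m j) i := by
  obtain ⟨c, hc⟩ := Mgen_dvd m hji
  have hM := Mgen_pos m j
  unfold digit
  rw [hc, ← Nat.div_div_eq_div_mul, ← Nat.div_div_eq_div_mul, mul_comm q,
    Nat.mul_add_div hM, Nat.div_eq_of_lt hk, add_zero, Nat.mul_div_cancel_left _ hM]

lemma digit_mul_Mgen_self {q j : ℕ} (hq : q < mseq m j) : digit m (q * Mgen m j) j = q := by
  rw [digit, Nat.mul_div_cancel _ (Mgen_pos m j), Nat.mod_eq_of_lt hq]

lemma ndeg_eq_of_Mgen_le_of_lt {n j : ℕ} (h1 : Mgen m j ≤ n) (h2 : n < Mgen m (j + 1)) :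
    ndeg m n = j := by
  have hdigit : digit m n j ≠ 0 := by
    have ha : 1 ≤ n / Mgen m j := (Nat.one_le_div_iff (Mgen_pos m j)).2 h1
    have hb : n / Mgen m j < mseq m j := by
      rwa [Nat.div_lt_iff_lt_mul (Mgen_pos m j), ← Mgen_succ]
    rw [digit, Nat.mod_eq_of_lt hb]
    omega
  have hle : ∀ i ∈ {i | digit m n i ≠ 0}, i ≤ j := fun i hi => by
    by_contra! hij
    exact hi (digit_eq_zero_of_lt_Mgen m (h2.trans_le (Mgen_mono m hij)))
  exact le_antisymm (csSup_le ⟨j, hdigit⟩ hle) (le_csSup ⟨j, hle⟩ hdigit)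

lemma lt_Mgen_ndeg_succ (n : ℕ) : n < Mgen m (ndeg m n + 1) := by
  rcases Nat.eq_zero_or_pos n with rfl | hn
  · exact Mgen_pos m _
  · obtain ⟨j, h1, h2⟩ := exists_Mgen_le_lt_succ m hn
    rwa [ndeg_eq_of_Mgen_le_of_lt m h1 h2]

lemma rad_eq_exp_pow (k : ℕ) (x : G m) :
    rad m k x = Complex.exp (2 * Real.pi * Complex.I / mseq m k) ^ (x k).val := by
  rw [rad, ← Complex.exp_nat_mul]
  congr 1
  ring

lemma isPrimitiveRoot_exp_mseq (k : ℕ) :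
    IsPrimitiveRoot (Complex.exp (2 * Real.pi * Complex.I / mseq m k)) (mseq m k) :=
  Complex.isPrimitiveRoot_exp _ (mseq_ne_zero m k)

lemma norm_rad (k : ℕ) (x : G m) : ‖rad m k x‖ = 1 := by
  rw [rad_eq_exp_pow, norm_pow, (isPrimitiveRoot_exp_mseq m k).norm'_eq_one (mseq_ne_zero m k),
    one_pow]

lemma rad_pow_mseq (k : ℕ) (x : G m) : rad m k x ^ mseq m k = 1 := by
  rw [rad_eq_exp_pow, pow_right_comm, (isPrimitiveRoot_exp_mseq m k).pow_eq_one, one_pow]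

lemma rad_eq_one_iff {k : ℕ} {x : G m} : rad m k x = 1 ↔ x k = 0 := by
  rw [rad_eq_exp_pow, (isPrimitiveRoot_exp_mseq m k).pow_eq_one_iff_dvd, ← ZMod.val_eq_zero]
  exact ⟨fun h => Nat.eq_zero_of_dvd_of_lt h (ZMod.val_lt _), fun h => h ▸ dvd_zero _⟩

lemma sum_rad_pow_mseq_eq_zero {j : ℕ} {x : G m} (h : x j ≠ 0) :
    ∑ l ∈ range (mseq m j), rad m j x ^ l = 0 := by
  rw [geom_sum_eq (mt (rad_eq_one_iff m).1 h), rad_pow_mseq, sub_self, zero_div]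

lemma psi_eq_prod_range {n N : ℕ} (h : n < N) (x : G m) :
    psi m n x = ∏ k ∈ range N, rad m k x ^ digit m n k := by
  refine prod_subset (range_subset_range.2 h) fun k _ hk => ?_
  have hnk : n < k := by simp only [mem_range] at hk; omega
  rw [digit_eq_zero_of_lt_Mgen m (hnk.trans (lt_Mgen_self m k)), pow_zero]

lemma norm_psi (n : ℕ) (x : G m) : ‖psi m n x‖ = 1 := by
  simp only [psi, norm_prod, norm_pow, norm_rad, one_pow, prod_const_one]

lemma psi_mul_Mgen_add {q k j : ℕ} (hk : k < Mgen m j) (x : G m) :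
    psi m (q * Mgen m j + k) x = psi m (q * Mgen m j) x * psi m k x := by
  have hN : ∀ n ≤ q * Mgen m j + k, n < q * Mgen m j + k + 1 := fun _ h => Nat.lt_succ_of_le h
  rw [psi_eq_prod_range m (hN _ le_rfl), psi_eq_prod_range m (hN _ (Nat.le_add_right _ _)),
    psi_eq_prod_range m (hN _ (Nat.le_add_left _ _)), ← prod_mul_distrib]
  refine prod_congr rfl fun i _ => ?_
  rcases lt_or_ge i j with h | h
  · rw [digit_mul_Mgen_add_of_lt m h, digit_mul_Mgen_of_lt m h, pow_zero, one_mul]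
  · rw [digit_mul_Mgen_add_of_le m hk h,
      digit_eq_zero_of_lt_Mgen m (hk.trans_le (Mgen_mono m h)), pow_zero, mul_one]

lemma psi_mul_Mgen {q j : ℕ} (hq : q < mseq m j) (x : G m) :
    psi m (q * Mgen m j) x = rad m j x ^ q := by
  have hlt : q * Mgen m j < Mgen m (j + 1) := by
    rw [Mgen_succ]
    exact Nat.mul_lt_mul_of_pos_right hq (Mgen_pos m j)
  have hj : j ∈ range (Mgen m (j + 1)) :=
    mem_range.2 ((lt_Mgen_self m j).trans (Mgen_strictMono m j.lt_succ_self))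
  rw [psi_eq_prod_range m hlt, prod_eq_single_of_mem j hj, digit_mul_Mgen_self m hq]
  intro i hi hij
  rcases lt_or_gt_of_ne hij with h | h
  · rw [digit_mul_Mgen_of_lt m h, pow_zero]
  · rw [digit_eq_zero_of_lt_Mgen m (hlt.trans_le (Mgen_mono m h)), pow_zero]

lemma psi_eq_one_of_mem_Icyl {s j : ℕ} (hs : s < Mgen m j) {x : G m} (hx : x ∈ Icyl m j) :
    psi m s x = 1 := by
  refine prod_eq_one fun i _ => ?_
  rcases lt_or_ge i j with h | h
  · rw [(rad_eq_one_iff m).2 (hx i h), one_pow]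
  · rw [digit_eq_zero_of_lt_Mgen m (hs.trans_le (Mgen_mono m h)), pow_zero]

lemma Dker_mul_Mgen_add {q k j : ℕ} (hk : k ≤ Mgen m j) (x : G m) :
    Dker m (q * Mgen m j + k) x
      = Dker m (q * Mgen m j) x + psi m (q * Mgen m j) x * Dker m k x := by
  rw [Dker, Dker, Dker, sum_range_add, mul_sum]
  congr 1
  exact sum_congr rfl fun s hs => psi_mul_Mgen_add m ((mem_range.1 hs).trans_le hk) x

lemma Dker_mul_Mgen {i j : ℕ} (hi : i ≤ mseq m j) (x : G m) :
    Dker m (i * Mgen m j) x = (∑ l ∈ range i, rad m j x ^ l) * Dker m (Mgen m j) x := by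
  induction i with
  | zero => simp [Dker]
  | succ i ih =>
    rw [add_mul, one_mul, Dker_mul_Mgen_add m le_rfl, ih (Nat.le_of_succ_le hi),
      psi_mul_Mgen m (Nat.lt_of_succ_le hi), sum_range_succ, add_mul]

lemma norm_Dker_mul_Mgen_le {i j : ℕ} (hi : i ≤ mseq m j) (x : G m) :
    ‖Dker m (i * Mgen m j) x‖ ≤ i * ‖Dker m (Mgen m j) x‖ := by
  rw [Dker_mul_Mgen m hi, norm_mul]
  gcongr
  refine (norm_sum_le _ _).trans ?_
  simp [norm_rad]

lemma Dker_of_mem_Icyl {k j : ℕ} (hk : k ≤ Mgen m j) {x : G m} (hx : x ∈ Icyl m j) :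
    Dker m k x = k := by
  rw [Dker, sum_congr rfl fun s hs => psi_eq_one_of_mem_Icyl m ((mem_range.1 hs).trans_le hk) hx]
  simp

lemma Dker_Mgen_of_notMem_Icyl {j : ℕ} {x : G m} (hx : x ∉ Icyl m j) :
    Dker m (Mgen m j) x = 0 := by
  induction j with
  | zero => exact absurd (fun i hi => absurd hi (Nat.not_lt_zero i)) hx
  | succ j ih =>
    rw [Mgen_succ, Dker_mul_Mgen m le_rfl]
    by_cases hxj : x ∈ Icyl m j
    · have : x j ≠ 0 := fun h =>
        hx fun i hi => (Nat.lt_succ_iff_lt_or_eq.1 hi).elim (hxj i) (· ▸ h)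
      rw [sum_rad_pow_mseq_eq_zero m this, zero_mul]
    · rw [ih hxj, mul_zero]

def sumDker (n : ℕ) (x : G m) : ℂ := ∑ k ∈ range n, Dker m (k + 1) x

lemma norm_sumDker (n : ℕ) (x : G m) : ‖sumDker m n x‖ = n * ‖Kker m n x‖ := by
  have h : sumDker m n x = n * Kker m n x := by
    rcases eq_or_ne n 0 with rfl | hn
    · simp [sumDker]
    · rw [Kker, ← mul_assoc, mul_inv_cancel₀ (Nat.cast_ne_zero.2 hn), one_mul, sumDker]
  rw [h, norm_mul, Complex.norm_natCast]

lemma sumDker_mul_Mgen_add {q k j : ℕ} (hk : k ≤ Mgen m j) (x : G m) :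
    sumDker m (q * Mgen m j + k) x = sumDker m (q * Mgen m j) x + k * Dker m (q * Mgen m j) x
      + psi m (q * Mgen m j) x * sumDker m k x := by
  have hD : ∀ s ∈ range k, Dker m (q * Mgen m j + s + 1) x
      = Dker m (q * Mgen m j) x + psi m (q * Mgen m j) x * Dker m (s + 1) x := fun s hs =>
    Dker_mul_Mgen_add m (Nat.succ_le_of_lt ((mem_range.1 hs).trans_le hk)) x
  rw [sumDker, sum_range_add, sum_congr rfl hD, sum_add_distrib, sum_const, card_range,
    nsmul_eq_mul, ← mul_sum, add_assoc, sumDker, sumDker]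

lemma Mgen_mul_norm_Dker_Mgen_le (j : ℕ) (x : G m) :
    Mgen m j * ‖Dker m (Mgen m j) x‖ ≤ 2 * ‖sumDker m (Mgen m j) x‖ := by
  by_cases hx : x ∈ Icyl m j
  · have hS : sumDker m (Mgen m j) x = ((∑ k ∈ range (Mgen m j), (k + 1) : ℕ) : ℂ) := by
      push_cast
      exact sum_congr rfl fun k hk => by
        rw [Dker_of_mem_Icyl m (Nat.succ_le_of_lt (mem_range.1 hk)) hx]
        push_cast; rfl
    have hsq : ∀ M : ℕ, M * M ≤ 2 * ∑ k ∈ range M, (k + 1) := fun M => by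
      induction M with
      | zero => simp
      | succ M ih => rw [sum_range_succ]; nlinarith
    rw [Dker_of_mem_Icyl m le_rfl hx, hS, Complex.norm_natCast, Complex.norm_natCast]
    exact_mod_cast hsq _
  · rw [Dker_Mgen_of_notMem_Icyl m hx, norm_zero, mul_zero]
    positivity

lemma norm_sumDker_mul_Mgen_add_le {a k j : ℕ} (ha : a ≤ mseq m j) (hk : k ≤ Mgen m j)
    (x : G m) :
    ‖sumDker m (a * Mgen m j + k) x‖ ≤
      ‖sumDker m (a * Mgen m j) x‖ + 2 * a * ‖sumDker m (Mgen m j) x‖ + ‖sumDker m k x‖ := by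
  have hmid : ‖(k : ℂ) * Dker m (a * Mgen m j) x‖ ≤ 2 * a * ‖sumDker m (Mgen m j) x‖ := by
    rw [norm_mul, Complex.norm_natCast]
    calc (k : ℝ) * ‖Dker m (a * Mgen m j) x‖
        ≤ Mgen m j * (a * ‖Dker m (Mgen m j) x‖) := by
          gcongr
          exact norm_Dker_mul_Mgen_le m ha x
      _ = a * (Mgen m j * ‖Dker m (Mgen m j) x‖) := by ring
      _ ≤ a * (2 * ‖sumDker m (Mgen m j) x‖) := by
          gcongr a * ?_
          exact Mgen_mul_norm_Dker_Mgen_le m j x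
      _ = 2 * a * ‖sumDker m (Mgen m j) x‖ := by ring
  have hlast : ‖psi m (a * Mgen m j) x * sumDker m k x‖ = ‖sumDker m k x‖ := by
    rw [norm_mul, norm_psi, one_mul]
  rw [sumDker_mul_Mgen_add m hk]
  linarith [norm_add₃_le (a := sumDker m (a * Mgen m j) x) (b := k * Dker m (a * Mgen m j) x)
    (c := psi m (a * Mgen m j) x * sumDker m k x)]

lemma norm_sumDker_mul_Mgen_le {a j : ℕ} (ha : a ≤ mseq m j) (x : G m) :
    ‖sumDker m (a * Mgen m j) x‖ ≤ a ^ 2 * ‖sumDker m (Mgen m j) x‖ := by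
  induction a with
  | zero => simp [sumDker]
  | succ a ih =>
    have h := norm_sumDker_mul_Mgen_add_le m (Nat.le_of_succ_le ha) le_rfl x
    rw [← add_one_mul] at h
    refine h.trans ?_
    push_cast
    nlinarith [ih (Nat.le_of_succ_le ha), norm_nonneg (sumDker m (Mgen m j) x)]

lemma norm_sumDker_le_of_lt_Mgen {R : ℕ} (hR : ∀ k, mseq m k ≤ R) (x : G m) {j n : ℕ}
    (hn : n < Mgen m j) :
    ‖sumDker m n x‖ ≤ R ^ 2 * ∑ l ∈ range j, ‖sumDker m (Mgen m l) x‖ := by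
  induction j generalizing n with
  | zero =>
    obtain rfl : n = 0 := Nat.lt_one_iff.1 hn
    simp [sumDker]
  | succ j ih =>
    set a := n / Mgen m j
    have hM := Mgen_pos m j
    have ha : a < mseq m j := by rwa [Nat.div_lt_iff_lt_mul hM, ← Mgen_succ]
    have hr : n % Mgen m j < Mgen m j := Nat.mod_lt _ hM
    have haR : (a : ℝ) + 1 ≤ R := by exact_mod_cast ha.trans_le (hR j)
    have hcoef : ((a : ℝ) ^ 2 + 2 * a) * ‖sumDker m (Mgen m j) x‖
        ≤ R ^ 2 * ‖sumDker m (Mgen m j) x‖ := by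
      gcongr
      nlinarith [(a.cast_nonneg : (0 : ℝ) ≤ a)]
    have hsplit := norm_sumDker_mul_Mgen_add_le m ha.le hr.le x
    rw [Nat.div_add_mod'] at hsplit
    have hlead := norm_sumDker_mul_Mgen_le m ha.le x
    have htail := ih hr
    rw [sum_range_succ]
    linarith

theorem fejer_kernel_pointwise_general (m : ℕ → ℕ) (R : ℕ) (hR : ∀ k, mseq m k ≤ R)
    (n : ℕ) (x : G m) :
    (n : ℝ) * ‖Kker m n x‖ ≤
      2 * (R : ℝ) ^ 2 *
        ∑ l ∈ Finset.range (ndeg m n + 1),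
          (Mgen m l : ℝ) * ‖Kker m (Mgen m l) x‖ := by
  simp_rw [← norm_sumDker]
  calc ‖sumDker m n x‖
      ≤ R ^ 2 * ∑ l ∈ range (ndeg m n + 1), ‖sumDker m (Mgen m l) x‖ :=
        norm_sumDker_le_of_lt_Mgen m hR x (lt_Mgen_ndeg_succ m n)
    _ ≤ 2 * R ^ 2 * ∑ l ∈ range (ndeg m n + 1), ‖sumDker m (Mgen m l) x‖ := by
        gcongr
        exact le_mul_of_one_le_left (by positivity) one_le_two

/-- pointwise estimate `n|K_n| ≤ 2R² ∑_{l=0}^{|n|} M_l |K_{M_l}|`. -/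
theorem fejer_kernel_pointwise (m : ℕ → ℕ) (R : ℕ) (hR : ∀ k, mseq m k ≤ R)
    (n : ℕ) (hn : 1 ≤ n) (x : G m) :
    (n : ℝ) * ‖Kker m n x‖ ≤
      2 * (R : ℝ) ^ 2 *
        ∑ l ∈ Finset.range (ndeg m n + 1),
          (Mgen m l : ℝ) * ‖Kker m (Mgen m l) x‖ :=
  fejer_kernel_pointwise_general m R hR n x

end VilPaper
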